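/- For all real μ > 0 and B > 0, writing p = e₀ · exp(μQ) with e₀ = (1,0,0,0,0,0,0) and entries p₀,…,p₆, one has the identity (p₀ + p₆) + p₁·e^{−B} + (1/3)(1 − e^{−B})·(p₁ + p₃ + p₅) = (1/3)·(1 − (3/4)e^{−5μ}e^{−B} + (1 − (1/2)e^{−B})e^{−3μ} + (1 + (5/4)e^{−B})e^{−μ}). (This is the conditional probability that a transfer sequence induces the matching topology ab|c on a species tree of type (ab;*;c), given that no A-joining transfer occurs before time t₂, where μ = (1/3)λt₂ and B = 3λ(t₃ − t₂).) -/

import Mathlib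

open Matrix

/-- The rate matrix `Q` of the 7-state continuous-time Markov chain. -/
noncomputable def Q : Matrix (Fin 7) (Fin 7) ℝ :=
  !![-3, 2, 0, 0, 0, 0, 1;
      1,-2, 1, 0, 0, 0, 0;
      0, 1,-3, 1, 1, 0, 0;
      0, 0, 1,-2, 1, 0, 0;
      0, 0, 1, 1,-3, 1, 0;
      0, 0, 0, 0, 1,-2, 1;
      1, 0, 0, 0, 0, 2,-3]

/-- `p μ = e₀ · exp(μQ)`, the state distribution at time `μ` started from state `0`. -/
noncomputable def p (μ : ℝ) : Fin 7 → ℝ :=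
  Matrix.vecMul (![1, 0, 0, 0, 0, 0, 0] : Fin 7 → ℝ) (NormedSpace.exp (μ • Q))

/-- Eigenvector matrix: columns are right eigenvectors of `Q` for eigenvalues
`0, -1, -1, -3, -4, -4, -5`. -/
noncomputable def S : Matrix (Fin 7) (Fin 7) ℝ :=
  !![ 1, -2,  4,  2, -2, -1, -2;
      1, -2,  3, -1,  1,  0,  1;
      1,  0, -1, -1,  0,  1, -1;
      1,  1, -3,  2,  1,  0,  0;
      1,  1, -2, -1, -2, -1,  1;
      1,  1,  0, -1,  1,  0, -1;
      1,  0,  2,  2,  0,  1,  2]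

/-- The inverse of `S`. -/
noncomputable def T : Matrix (Fin 7) (Fin 7) ℝ :=
  !![ 1/12,   1/6,   1/6,  1/6,  1/6,   1/6,  1/12;
     -1/24, -7/24, -5/24, -1/6, 1/24, 11/24,  5/24;
      1/24, -1/24,  -1/8, -1/6,-1/24,  5/24,   1/8;
      1/12, -1/12, -1/12,  1/6,-1/12, -1/12,  1/12;
     -1/12,   1/6,  -1/6,  1/6, -1/6,   1/6, -1/12;
     -1/12,  -1/6,   1/2, -1/6, -1/6,  -1/6,   1/4;
      -1/8,   1/8,  -1/8,    0,  1/8,  -1/8,   1/8]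

/-- The eigenvalues of `μ • Q`. -/
noncomputable def d (μ : ℝ) : Fin 7 → ℝ := ![0, -μ, -μ, -3*μ, -4*μ, -4*μ, -5*μ]

set_option maxHeartbeats 2000000 in
lemma hST : S * T = 1 := by
  ext i j
  rw [Matrix.mul_apply, Fin.sum_univ_succ, Fin.sum_univ_succ, Fin.sum_univ_succ,
    Fin.sum_univ_succ, Fin.sum_univ_succ, Fin.sum_univ_succ, Fin.sum_univ_one]
  fin_cases i <;> fin_cases j <;>
    (simp [S, T, Matrix.one_apply] <;> norm_num)

set_option maxHeartbeats 2000000 in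
lemma hTS : T * S = 1 := by
  ext i j
  rw [Matrix.mul_apply, Fin.sum_univ_succ, Fin.sum_univ_succ, Fin.sum_univ_succ,
    Fin.sum_univ_succ, Fin.sum_univ_succ, Fin.sum_univ_succ, Fin.sum_univ_one]
  fin_cases i <;> fin_cases j <;>
    (simp [S, T, Matrix.one_apply] <;> norm_num)

set_option maxHeartbeats 2000000 in
lemma hQdecomp (μ : ℝ) : μ • Q = S * Matrix.diagonal (d μ) * T := by
  ext i j
  rw [Matrix.mul_apply, Fin.sum_univ_succ, Fin.sum_univ_succ, Fin.sum_univ_succ,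
    Fin.sum_univ_succ, Fin.sum_univ_succ, Fin.sum_univ_succ, Fin.sum_univ_one]
  simp only [Matrix.mul_diagonal]
  fin_cases i <;> fin_cases j <;>
    · simp [S, T, Q, d, Matrix.smul_apply]
      ring

lemma hSunit : IsUnit S := ⟨⟨S, T, hST, hTS⟩, rfl⟩

lemma hSinv : S⁻¹ = T := Matrix.inv_eq_right_inv hST

lemma exp_muQ (μ : ℝ) :
    NormedSpace.exp (μ • Q) = S * Matrix.diagonal (fun i => Real.exp (d μ i)) * T := by
  have h1 : NormedSpace.exp (μ • Q) = S * NormedSpace.exp (Matrix.diagonal (d μ)) * S⁻¹ := by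
    rw [hQdecomp, ← hSinv, Matrix.exp_conj S _ hSunit, hSinv]
  rw [h1, hSinv, Matrix.exp_diagonal]
  congr 2
  funext i
  rw [Pi.exp_def, Real.exp_eq_exp_ℝ]

lemma hS00 : S 0 0 = 1 := rfl
lemma hS01 : S 0 1 = -2 := rfl
lemma hS02 : S 0 2 = 4 := rfl
lemma hS03 : S 0 3 = 2 := rfl
lemma hS04 : S 0 4 = -2 := rfl
lemma hS05 : S 0 5 = -1 := rfl
lemma hS06 : S 0 6 = -2 := rfl
lemma hT00 : T 0 0 = 1/12 := rfl
lemma hT01 : T 0 1 = 1/6 := rfl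
lemma hT03 : T 0 3 = 1/6 := rfl
lemma hT05 : T 0 5 = 1/6 := rfl
lemma hT06 : T 0 6 = 1/12 := rfl
lemma hT10 : T 1 0 = -1/24 := rfl
lemma hT11 : T 1 1 = -7/24 := rfl
lemma hT13 : T 1 3 = -1/6 := rfl
lemma hT15 : T 1 5 = 11/24 := rfl
lemma hT16 : T 1 6 = 5/24 := rfl
lemma hT20 : T 2 0 = 1/24 := rfl
lemma hT21 : T 2 1 = -1/24 := rfl
lemma hT23 : T 2 3 = -1/6 := rfl
lemma hT25 : T 2 5 = 5/24 := rfl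
lemma hT26 : T 2 6 = 1/8 := rfl
lemma hT30 : T 3 0 = 1/12 := rfl
lemma hT31 : T 3 1 = -1/12 := rfl
lemma hT33 : T 3 3 = 1/6 := rfl
lemma hT35 : T 3 5 = -1/12 := rfl
lemma hT36 : T 3 6 = 1/12 := rfl
lemma hT40 : T 4 0 = -1/12 := rfl
lemma hT41 : T 4 1 = 1/6 := rfl
lemma hT43 : T 4 3 = 1/6 := rfl
lemma hT45 : T 4 5 = 1/6 := rfl
lemma hT46 : T 4 6 = -1/12 := rfl
lemma hT50 : T 5 0 = -1/12 := rfl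
lemma hT51 : T 5 1 = -1/6 := rfl
lemma hT53 : T 5 3 = -1/6 := rfl
lemma hT55 : T 5 5 = -1/6 := rfl
lemma hT56 : T 5 6 = 1/4 := rfl
lemma hT60 : T 6 0 = -1/8 := rfl
lemma hT61 : T 6 1 = 1/8 := rfl
lemma hT63 : T 6 3 = 0 := rfl
lemma hT65 : T 6 5 = -1/8 := rfl
lemma hT66 : T 6 6 = 1/8 := rfl
lemma hd0 (μ : ℝ) : d μ 0 = 0 := rfl
lemma hd1 (μ : ℝ) : d μ 1 = -μ := rfl
lemma hd2 (μ : ℝ) : d μ 2 = -μ := rfl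
lemma hd3 (μ : ℝ) : d μ 3 = -3*μ := rfl
lemma hd4 (μ : ℝ) : d μ 4 = -4*μ := rfl
lemma hd5 (μ : ℝ) : d μ 5 = -4*μ := rfl
lemma hd6 (μ : ℝ) : d μ 6 = -5*μ := rfl

lemma p_formula (μ : ℝ) (i : Fin 7) :
    p μ i = S 0 0 * Real.exp (d μ 0) * T 0 i + S 0 1 * Real.exp (d μ 1) * T 1 i
      + S 0 2 * Real.exp (d μ 2) * T 2 i + S 0 3 * Real.exp (d μ 3) * T 3 i
      + S 0 4 * Real.exp (d μ 4) * T 4 i + S 0 5 * Real.exp (d μ 5) * T 5 i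
      + S 0 6 * Real.exp (d μ 6) * T 6 i := by
  rw [p, exp_muQ]
  rw [show (Matrix.vecMul (![1, 0, 0, 0, 0, 0, 0] : Fin 7 → ℝ)
      (S * Matrix.diagonal (fun i => Real.exp (d μ i)) * T)) i
    = (S * Matrix.diagonal (fun i => Real.exp (d μ i)) * T) 0 i by
      simp [Matrix.vecMul, dotProduct, Fin.sum_univ_succ]]
  rw [Matrix.mul_apply, Fin.sum_univ_seven]
  simp only [Matrix.mul_diagonal]

theorem match_prob_given_no_joining_ab_star_c (μ B : ℝ) (hμ : 0 < μ) (hB : 0 < B) :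
    (p μ 0 + p μ 6) + p μ 1 * Real.exp (-B)
        + (1/3) * (1 - Real.exp (-B)) * (p μ 1 + p μ 3 + p μ 5) =
      (1/3) * (1 - (3/4) * Real.exp (-5 * μ) * Real.exp (-B)
        + (1 - (1/2) * Real.exp (-B)) * Real.exp (-3 * μ)
        + (1 + (5/4) * Real.exp (-B)) * Real.exp (-μ)) := by
  have h0 := p_formula μ 0
  have h1 := p_formula μ 1
  have h3 := p_formula μ 3
  have h5 := p_formula μ 5
  have h6 := p_formula μ 6
  simp only [Real.exp_zero, hS00, hS01, hS02, hS03, hS04, hS05, hS06, hT00, hT01, hT03, hT05, hT06, hT10, hT11, hT13, hT15, hT16, hT20, hT21, hT23, hT25, hT26, hT30, hT31, hT33, hT35, hT36, hT40, hT41, hT43, hT45, hT46, hT50, hT51, hT53, hT55, hT56, hT60, hT61, hT63, hT65, hT66, hd0, hd1, hd2, hd3, hd4, hd5, hd6] at h0 h1 h3 h5 h6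
  rw [h0, h1, h3, h5, h6]
  ring
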